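/- arXiv:1409.1128 — 2 statements merged into one kernel-verified Lean document; each statement's English description precedes it below -/
import Mathlib

section
/- Let H₁, H₂ be complex Hilbert spaces, ν a selfadjoint bounded operator on H₁ that is strictly positive definite, a₀ a selfadjoint nonnegative bounded operator on H₂ that is strictly positive definite on its range, ζ₀ : H₁ → H₂ a bounded operator, S a selfadjoint bounded operator on H₁, and R a selfadjoint bounded operator on H₂ that is strictly positive definite on the kernel of a₀. Then there exist ρ₁ > 0 and c > 0 such that for every ρ > ρ₁ the block operator on H₁ ⊕ H₂ given by ρ·diag(ν, a₀) + ((S + ζ₀*Rζ₀, −ζ₀*R), (−Rζ₀, R)) is strictly positive definite with constant c, i.e. ⟨(x,y), (ρ·diag(ν,a₀) + ((S + ζ₀*Rζ₀, −ζ₀*R),(−Rζ₀, R)))(x,y)⟩ ≥ c(‖x‖² + ‖y‖²) for all (x,y) ∈ H₁ ⊕ H₂. -/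
/-!
The quadratic form of the block operator at `(x, y)` is
`ρ⟪x, ν x⟫ + ⟪x, S x⟫ + ρ⟪y, a₀ y⟫ + ⟪ζ₀ x - y, R (ζ₀ x - y)⟫`.
Split `y = y₀ + y₁` along `ker a₀ ⊕ (ker a₀)ᗮ`. Since `a₀` is selfadjoint, `(ker a₀)ᗮ` is the
closure of its range, so `a₀` is strictly positive there and `ρ a₀` dominates any multiple of
`‖y₁‖²` once `ρ` is large. On `ker a₀` the form of `R` is coercive, so the `R`-term is at least
`c‖y₀‖² - C‖ζ₀ x - y₁‖²`, and the loss `C‖ζ₀ x - y₁‖²` is absorbed by `ρ ν` and `ρ a₀`.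
-/

open ContinuousLinearMap
noncomputable section

namespace Evo

variable (H₁ H₂ : Type*)
  [NormedAddCommGroup H₁] [InnerProductSpace ℂ H₁] [CompleteSpace H₁]
  [NormedAddCommGroup H₂] [InnerProductSpace ℂ H₂] [CompleteSpace H₂]

/-- The Hilbert space direct sum `H₁ ⊕ H₂`. -/
abbrev Duo := WithLp 2 (H₁ × H₂)

def eD : Duo H₁ H₂ ≃L[ℂ] H₁ × H₂ := WithLp.prodContinuousLinearEquiv 2 ℂ _ _

variable {H₁ H₂}

def π₁ : Duo H₁ H₂ →L[ℂ] H₁ := (fst ℂ H₁ H₂).comp (eD H₁ H₂ : _ →L[ℂ] _)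
def π₂ : Duo H₁ H₂ →L[ℂ] H₂ := (snd ℂ H₁ H₂).comp (eD H₁ H₂ : _ →L[ℂ] _)

/-- A block operator on `H₁ ⊕ H₂` from its two rows. -/
def mk2 (r1 : Duo H₁ H₂ →L[ℂ] H₁) (r2 : Duo H₁ H₂ →L[ℂ] H₂) : Duo H₁ H₂ →L[ℂ] Duo H₁ H₂ :=
  ((eD H₁ H₂).symm : (H₁ × H₂) →L[ℂ] Duo H₁ H₂).comp (r1.prod r2)

/-- A bounded operator is strictly positive definite on a subspace `V`. -/
def StrictPosOn {E : Type*} [NormedAddCommGroup E] [InnerProductSpace ℂ E]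
    (T : E →L[ℂ] E) (V : Submodule ℂ E) : Prop :=
  ∃ c > (0 : ℝ), ∀ x ∈ V, c * ‖x‖ ^ 2 ≤ (inner ℂ x (T x) : ℂ).re

section Operators

variable {E F : Type*} [NormedAddCommGroup E] [InnerProductSpace ℂ E]
  [NormedAddCommGroup F] [InnerProductSpace ℂ F]

lemma neg_opNorm_mul_le_re_inner_apply (T : E →L[ℂ] F) (x : F) (y : E) :
    -(‖T‖ * ‖x‖ * ‖y‖) ≤ (inner ℂ x (T y) : ℂ).re := by
  have h := re_inner_le_norm (𝕜 := ℂ) x (-T y)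
  rw [inner_neg_right, map_neg, norm_neg, RCLike.re_to_complex] at h
  nlinarith [T.le_opNorm y, norm_nonneg x]

lemma norm_sub_sq_le (u v : E) : ‖u - v‖ ^ 2 ≤ 2 * (‖u‖ ^ 2 + ‖v‖ ^ 2) := by
  nlinarith [parallelogram_law_with_norm ℂ u v, sq_nonneg ‖u + v‖]

lemma StrictPosOn.topologicalClosure {T : E →L[ℂ] E} {V : Submodule ℂ E}
    (hT : StrictPosOn T V) : StrictPosOn T V.topologicalClosure := by
  obtain ⟨c, hc, h⟩ := hT
  have hclosed : IsClosed {x : E | c * ‖x‖ ^ 2 ≤ (inner ℂ x (T x) : ℂ).re} :=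
    isClosed_le (by fun_prop) (Complex.continuous_re.comp (continuous_id.inner T.continuous))
  exact ⟨c, hc, fun x hx ↦ hclosed.closure_subset_iff.mpr h hx⟩

lemma StrictPosOn.eventually_le_mul_re_inner {T : E →L[ℂ] E} {V : Submodule ℂ E}
    (hT : StrictPosOn T V) (M : ℝ) :
    ∀ᶠ ρ in Filter.atTop, ∀ x ∈ V, M * ‖x‖ ^ 2 ≤ ρ * (inner ℂ x (T x) : ℂ).re := by
  obtain ⟨c, hc, h⟩ := hT
  filter_upwards [Filter.eventually_ge_atTop (M / c), Filter.eventually_ge_atTop 0]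
    with ρ hρM hρ x hx
  calc M * ‖x‖ ^ 2 ≤ ρ * c * ‖x‖ ^ 2 := by
        gcongr
        exact (div_le_iff₀ hc).mp hρM
    _ = ρ * (c * ‖x‖ ^ 2) := by ring
    _ ≤ ρ * (inner ℂ x (T x) : ℂ).re := by gcongr; exact h x hx

lemma StrictPosOn.exists_le_re_inner_add {T : E →L[ℂ] E} {V : Submodule ℂ E}
    (hT : StrictPosOn T V) :
    ∃ c > (0 : ℝ), ∃ C ≥ (0 : ℝ), ∀ v ∈ V, ∀ w,
      c * ‖v‖ ^ 2 - C * ‖w‖ ^ 2 ≤ (inner ℂ (v + w) (T (v + w)) : ℂ).re := by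
  obtain ⟨c, hc, h⟩ := hT
  refine ⟨c / 2, half_pos hc, ‖T‖ + 2 * ‖T‖ ^ 2 / c, by positivity, fun v hv w ↦ ?_⟩
  have hexpand : (inner ℂ (v + w) (T (v + w)) : ℂ).re = (inner ℂ v (T v) : ℂ).re
      + (inner ℂ v (T w) : ℂ).re + (inner ℂ w (T v) : ℂ).re + (inner ℂ w (T w) : ℂ).re := by
    simp only [map_add, inner_add_left, inner_add_right, Complex.add_re]
    ring
  have hamgm : 2 * ‖T‖ * ‖v‖ * ‖w‖ ≤ c / 2 * ‖v‖ ^ 2 + 2 * ‖T‖ ^ 2 / c * ‖w‖ ^ 2 := by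
    have : 0 ≤ (c * ‖v‖ - 2 * ‖T‖ * ‖w‖) ^ 2 / (2 * c) := by positivity
    have hsq : (c * ‖v‖ - 2 * ‖T‖ * ‖w‖) ^ 2 / (2 * c)
        = c / 2 * ‖v‖ ^ 2 + 2 * ‖T‖ ^ 2 / c * ‖w‖ ^ 2 - 2 * ‖T‖ * ‖v‖ * ‖w‖ := by
      field_simp
      ring
    linarith
  have hvw := neg_opNorm_mul_le_re_inner_apply T v w
  have hwv := neg_opNorm_mul_le_re_inner_apply T w v
  have hww := neg_opNorm_mul_le_re_inner_apply T w w
  linarith [h v hv]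

lemma _root_.IsSelfAdjoint.strictPosOn_orthogonal_ker [CompleteSpace E] {T : E →L[ℂ] E}
    (hT : IsSelfAdjoint T) (h : StrictPosOn T (LinearMap.range (T : E →ₗ[ℂ] E))) :
    StrictPosOn T (LinearMap.ker (T : E →ₗ[ℂ] E))ᗮ := by
  rw [T.orthogonal_ker, hT.adjoint_eq]
  exact h.topologicalClosure

lemma _root_.IsSelfAdjoint.inner_add_apply_add_of_mem_ker [CompleteSpace E] {T : E →L[ℂ] E}
    (hT : IsSelfAdjoint T) {y₀ : E} (hy₀ : y₀ ∈ LinearMap.ker (T : E →ₗ[ℂ] E)) (y₁ : E) :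
    (inner ℂ (y₀ + y₁) (T (y₀ + y₁)) : ℂ) = inner ℂ y₁ (T y₁) := by
  have hTy₀ : T y₀ = 0 := hy₀
  rw [map_add, hTy₀, zero_add, inner_add_left, ← T.adjoint_inner_left, hT.adjoint_eq, hTy₀,
    inner_zero_left, zero_add]

end Operators

lemma exists_coercive_smul_add_shift {E : Type*} [NormedAddCommGroup E]
    [InnerProductSpace ℂ E] [CompleteSpace E] {a₀ R : E →L[ℂ] E} (ha₀ : IsSelfAdjoint a₀)
    (ha₀ran : StrictPosOn a₀ (LinearMap.range (a₀ : E →ₗ[ℂ] E)))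
    (hRker : StrictPosOn R (LinearMap.ker (a₀ : E →ₗ[ℂ] E))) :
    ∃ c > (0 : ℝ), ∃ C ≥ (0 : ℝ), ∀ᶠ ρ in Filter.atTop, ∀ u y : E,
      c * ‖y‖ ^ 2 - C * ‖u‖ ^ 2 ≤
        ρ * (inner ℂ y (a₀ y) : ℂ).re + (inner ℂ (u - y) (R (u - y)) : ℂ).re := by
  obtain ⟨c, hc, C, hC, hR⟩ := hRker.exists_le_re_inner_add
  refine ⟨c, hc, 2 * C, by positivity, ?_⟩
  filter_upwards [(ha₀.strictPosOn_orthogonal_ker ha₀ran).eventually_le_mul_re_inner (c + 2 * C)]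
    with ρ ha₀ρ u y
  obtain ⟨y₀, hy₀, y₁, hy₁, rfl⟩ := Submodule.exists_add_mem_mem_orthogonal
    (K := LinearMap.ker (a₀ : E →ₗ[ℂ] E)) y
  have hpyth : ‖y₀ + y₁‖ ^ 2 = ‖y₀‖ ^ 2 + ‖y₁‖ ^ 2 := by
    simpa only [sq] using norm_add_sq_eq_norm_sq_add_norm_sq_of_inner_eq_zero y₀ y₁
      ((Submodule.mem_orthogonal _ _).mp hy₁ y₀ hy₀)
  have ha₀y : ρ * (inner ℂ (y₀ + y₁) (a₀ (y₀ + y₁)) : ℂ).re ≥ (c + 2 * C) * ‖y₁‖ ^ 2 := by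
    rw [ha₀.inner_add_apply_add_of_mem_ker hy₀]
    exact ha₀ρ y₁ hy₁
  have hRy : c * ‖y₀‖ ^ 2 - C * ‖u - y₁‖ ^ 2 ≤
      (inner ℂ (u - (y₀ + y₁)) (R (u - (y₀ + y₁))) : ℂ).re := by
    have h := hR (-y₀) (neg_mem hy₀) (u - y₁)
    rwa [norm_neg, neg_add_eq_sub, sub_sub, add_comm y₁] at h
  have hu : C * ‖u - y₁‖ ^ 2 ≤ C * (2 * (‖u‖ ^ 2 + ‖y₁‖ ^ 2)) := by
    gcongr
    exact norm_sub_sq_le u y₁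
  rw [hpyth]
  linarith

lemma re_inner_mk2_block_apply (ν S : H₁ →L[ℂ] H₁) (a₀ R : H₂ →L[ℂ] H₂) (ζ₀ : H₁ →L[ℂ] H₂)
    (ρ : ℝ) (p : Duo H₁ H₂) :
    (inner ℂ p
        ((mk2
          ((((ρ : ℂ) • ν + S + (adjoint ζ₀).comp (R.comp ζ₀)).comp π₁)
            + (-((adjoint ζ₀).comp R)).comp π₂)
          ((-(R.comp ζ₀)).comp π₁ + ((ρ : ℂ) • a₀ + R).comp π₂)) p) : ℂ).re
      = ρ * (inner ℂ p.fst (ν p.fst) : ℂ).re + (inner ℂ p.fst (S p.fst) : ℂ).re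
        + ρ * (inner ℂ p.snd (a₀ p.snd) : ℂ).re
        + (inner ℂ (ζ₀ p.fst - p.snd) (R (ζ₀ p.fst - p.snd)) : ℂ).re := by
  have h : (inner ℂ p
        ((mk2
          ((((ρ : ℂ) • ν + S + (adjoint ζ₀).comp (R.comp ζ₀)).comp π₁)
            + (-((adjoint ζ₀).comp R)).comp π₂)
          ((-(R.comp ζ₀)).comp π₁ + ((ρ : ℂ) • a₀ + R).comp π₂)) p) : ℂ)
      = ρ * inner ℂ p.fst (ν p.fst) + inner ℂ p.fst (S p.fst) + ρ * inner ℂ p.snd (a₀ p.snd)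
        + inner ℂ (ζ₀ p.fst - p.snd) (R (ζ₀ p.fst - p.snd)) := by
    simp only [mk2, eD, π₁, π₂, add_comp, smul_comp, neg_comp, comp_apply, prod_apply, add_apply,
      smul_apply, neg_apply, ContinuousLinearEquiv.coe_coe, WithLp.prodContinuousLinearEquiv_apply,
      WithLp.prodContinuousLinearEquiv_symm_apply, coe_fst', coe_snd', WithLp.ofLp_fst,
      WithLp.ofLp_snd, WithLp.prod_inner_apply, inner_add_right, inner_neg_right, inner_smul_right,
      adjoint_inner_right, map_sub, inner_sub_right, inner_sub_left]
    ring
  simp only [h, Complex.add_re, Complex.re_ofReal_mul]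

theorem block_strictly_positive_general
    (ν : H₁ →L[ℂ] H₁)
    (hνpos : ∃ c > (0 : ℝ), ∀ x : H₁, c * ‖x‖ ^ 2 ≤ (inner ℂ x (ν x) : ℂ).re)
    (a₀ : H₂ →L[ℂ] H₂) (ha₀ : IsSelfAdjoint a₀)
    (ha₀ran : StrictPosOn a₀ (LinearMap.range (a₀ : H₂ →ₗ[ℂ] H₂)))
    (ζ₀ : H₁ →L[ℂ] H₂)
    (S : H₁ →L[ℂ] H₁)
    (R : H₂ →L[ℂ] H₂)
    (hRker : StrictPosOn R (LinearMap.ker (a₀ : H₂ →ₗ[ℂ] H₂))) :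
    ∃ ρ₁ > (0 : ℝ), ∃ c > (0 : ℝ), ∀ ρ > ρ₁, ∀ p : Duo H₁ H₂,
      c * (‖(WithLp.equiv 2 (H₁ × H₂) p).1‖ ^ 2 + ‖(WithLp.equiv 2 (H₁ × H₂) p).2‖ ^ 2) ≤
        (inner ℂ p
          ((mk2
            -- first row `ρν + S + ζ₀*Rζ₀` and `−ζ₀*R` :
            ((((ρ : ℂ) • ν + S + (adjoint ζ₀).comp (R.comp ζ₀)).comp π₁)
              + (-((adjoint ζ₀).comp R)).comp π₂)
            -- second row `−Rζ₀` and `ρa₀ + R` :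
            ((-(R.comp ζ₀)).comp π₁ + ((ρ : ℂ) • a₀ + R).comp π₂)) p) : ℂ).re := by
  obtain ⟨c, hc, C, hC, hy⟩ := exists_coercive_smul_add_shift ha₀ ha₀ran hRker
  obtain ⟨cν, hcν, hν⟩ := hνpos
  have hx := (show StrictPosOn ν ⊤ from ⟨cν, hcν, fun x _ ↦ hν x⟩).eventually_le_mul_re_inner
    (c + ‖S‖ + C * ‖ζ₀‖ ^ 2)
  obtain ⟨ρ₀, hρ₀⟩ := Filter.eventually_atTop.mp (hx.and hy)
  refine ⟨max ρ₀ 1, by positivity, c, hc, fun ρ hρ p ↦ ?_⟩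
  obtain ⟨hxρ, hyρ⟩ := hρ₀ ρ ((le_max_left _ _).trans hρ.le)
  rw [re_inner_mk2_block_apply]
  have hνx := hxρ p.fst trivial
  have hRy := hyρ (ζ₀ p.fst) p.snd
  have hSx := neg_opNorm_mul_le_re_inner_apply S p.fst p.fst
  have hζx : C * ‖ζ₀ p.fst‖ ^ 2 ≤ C * (‖ζ₀‖ ^ 2 * ‖p.fst‖ ^ 2) := by
    rw [← mul_pow]
    gcongr
    exact ζ₀.le_opNorm p.fst
  change c * (‖p.fst‖ ^ 2 + ‖p.snd‖ ^ 2) ≤ _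
  linarith

/-- **The block operator `ρ·diag(ν,a₀) + ((S+ζ₀*Rζ₀, −ζ₀*R),(−Rζ₀, R))` is strictly positive
definite, uniformly for all large `ρ`.** -/
theorem block_strictly_positive
    (ν : H₁ →L[ℂ] H₁) (hν : IsSelfAdjoint ν)
    (hνpos : ∃ c > (0 : ℝ), ∀ x : H₁, c * ‖x‖ ^ 2 ≤ (inner ℂ x (ν x) : ℂ).re)
    (a₀ : H₂ →L[ℂ] H₂) (ha₀ : IsSelfAdjoint a₀)
    (ha₀nonneg : ∀ y : H₂, 0 ≤ (inner ℂ y (a₀ y) : ℂ).re)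
    (ha₀ran : StrictPosOn a₀ (LinearMap.range (a₀ : H₂ →ₗ[ℂ] H₂)))
    (ζ₀ : H₁ →L[ℂ] H₂)
    (S : H₁ →L[ℂ] H₁) (hS : IsSelfAdjoint S)
    (R : H₂ →L[ℂ] H₂) (hR : IsSelfAdjoint R)
    (hRker : StrictPosOn R (LinearMap.ker (a₀ : H₂ →ₗ[ℂ] H₂))) :
    ∃ ρ₁ > (0 : ℝ), ∃ c > (0 : ℝ), ∀ ρ > ρ₁, ∀ p : Duo H₁ H₂,
      c * (‖(WithLp.equiv 2 (H₁ × H₂) p).1‖ ^ 2 + ‖(WithLp.equiv 2 (H₁ × H₂) p).2‖ ^ 2) ≤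
        (inner ℂ p
          ((mk2
            -- first row `ρν + S + ζ₀*Rζ₀` and `−ζ₀*R` :
            ((((ρ : ℂ) • ν + S + (adjoint ζ₀).comp (R.comp ζ₀)).comp π₁)
              + (-((adjoint ζ₀).comp R)).comp π₂)
            -- second row `−Rζ₀` and `ρa₀ + R` :
            ((-(R.comp ζ₀)).comp π₁ + ((ρ : ℂ) • a₀ + R).comp π₂)) p) : ℂ).re :=
  block_strictly_positive_general ν hνpos a₀ ha₀ ha₀ran ζ₀ S R hRker

end Evo
end
end

section
/- Let H be a complex Hilbert space, M₀ a selfadjoint bounded operator on H, r > 0 and M₁ : B(0,r) → L(H) an analytic and bounded function, and set M(z) := M₀ + zM₁(z). If there exist c > 0 and ρ₁ > 0 such that ρM₀ + Re M₁(0) ≥ c for all ρ > ρ₁, then there exist ρ₀ > 0 and c′ > 0 such that for all z in the open disc B(1/(2ρ₀), 1/(2ρ₀)) ⊆ ℂ one has Re( z⁻¹M(z) ) := ½( z⁻¹M(z) + (z⁻¹M(z))* ) ≥ c′. -/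
/-!
The disc `B(1/(2ρ₀), 1/(2ρ₀))` is the set where `Re z⁻¹ > ρ₀`, and it lies in `B(0, 1/ρ₀)`.
On it `z⁻¹M(z) = z⁻¹M₀ + M₁(z)`, and as `M₀` is selfadjoint, `Re (z⁻¹M₀) = (Re z⁻¹) M₀`. Hence
`Re (z⁻¹M(z)) = (Re z⁻¹) M₀ + Re M₁(0) + Re (M₁(z) - M₁(0)) ≥ c - ‖M₁(z) - M₁(0)‖`, which is
`≥ c/2` as soon as `ρ₀ ≥ ρ₁` is so large that continuity of `M₁` at `0` gives
`‖M₁(z) - M₁(0)‖ ≤ c/2` on `B(0, 1/ρ₀)`.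
-/

open ContinuousLinearMap
noncomputable section

section InnerEstimates

variable {𝕜 E : Type*} [RCLike 𝕜] [NormedAddCommGroup E] [InnerProductSpace 𝕜 E]

open RCLike

theorem re_inner_smul_add_apply_of_isSelfAdjoint [CompleteSpace E] {A : E →L[𝕜] E}
    (hA : IsSelfAdjoint A) (w : 𝕜) (B : E →L[𝕜] E) (x : E) :
    re (inner 𝕜 x ((w • A + B) x)) = re w * re (inner 𝕜 x (A x)) + re (inner 𝕜 x (B x)) := by
  have hA_im : im (inner 𝕜 x (A x)) = 0 := hA.isSymmetric.im_inner_self_apply x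
  simp [inner_add_right, inner_smul_right, hA_im]

theorem re_inner_half_add_adjoint_apply [CompleteSpace E] (B : E →L[𝕜] E) (x : E) :
    re (inner 𝕜 x (((1 / 2 : 𝕜) • (B + adjoint B)) x)) = re (inner 𝕜 x (B x)) := by
  rw [smul_apply, add_apply, inner_smul_right, inner_add_right, adjoint_inner_right,
    ← inner_conj_symm (B x) x, add_conj, ← mul_assoc]
  norm_num

theorem re_inner_apply_le_add (A B : E →L[𝕜] E) (x : E) :
    re (inner 𝕜 x (B x)) ≤ re (inner 𝕜 x (A x)) + ‖B - A‖ * ‖x‖ ^ 2 := by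
  have h : re (inner 𝕜 x ((B - A) x)) ≤ ‖B - A‖ * ‖x‖ ^ 2 :=
    calc re (inner 𝕜 x ((B - A) x)) ≤ ‖x‖ * ‖(B - A) x‖ := re_inner_le_norm _ _
      _ ≤ ‖x‖ * (‖B - A‖ * ‖x‖) := by gcongr; exact le_opNorm _ _
      _ = ‖B - A‖ * ‖x‖ ^ 2 := by ring
  rw [sub_apply, inner_sub_right, map_sub] at h
  linarith

theorem sub_mul_le_re_inner_smul_add_apply [CompleteSpace E] {A : E →L[𝕜] E}
    (hA : IsSelfAdjoint A) (w : 𝕜) {B₀ B : E →L[𝕜] E} {c d : ℝ} (hB : ‖B₀ - B‖ ≤ d) (x : E)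
    (hcoer : c * ‖x‖ ^ 2 ≤ re (inner 𝕜 x ((((re w : ℝ) : 𝕜) • A +
      (1 / 2 : 𝕜) • (B₀ + adjoint B₀)) x))) :
    (c - d) * ‖x‖ ^ 2 ≤ re (inner 𝕜 x ((w • A + B) x)) := by
  rw [re_inner_smul_add_apply_of_isSelfAdjoint hA, re_inner_half_add_adjoint_apply,
    ofReal_re] at hcoer
  rw [re_inner_smul_add_apply_of_isSelfAdjoint hA]
  nlinarith [re_inner_apply_le_add B B₀ x, mul_le_mul_of_nonneg_right hB (sq_nonneg ‖x‖)]

end InnerEstimates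

section Disc

variable {s : ℝ} {z : ℂ}

theorem normSq_lt_of_mem_ball (hz : z ∈ Metric.ball (s : ℂ) s) :
    Complex.normSq z < 2 * s * z.re := by
  have hs : 0 < s := Metric.pos_of_mem_ball hz
  rw [Metric.mem_ball, dist_comm, Complex.dist_eq,
    ← sq_lt_sq₀ (norm_nonneg _) hs.le, Complex.sq_norm, Complex.normSq_apply] at hz
  rw [Complex.normSq_apply]
  simp only [Complex.sub_re, Complex.ofReal_re, Complex.sub_im, Complex.ofReal_im] at hz
  nlinarith

theorem lt_re_inv_of_mem_ball (hz : z ∈ Metric.ball (s : ℂ) s) : (2 * s)⁻¹ < z⁻¹.re := by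
  have hs : 0 < s := Metric.pos_of_mem_ball hz
  have h := normSq_lt_of_mem_ball hz
  have hz0 : 0 < Complex.normSq z := by
    refine Complex.normSq_pos.mpr fun h0 => ?_
    simp [h0] at h
  rw [Complex.inv_re, lt_div_iff₀ hz0, inv_mul_lt_iff₀ (by positivity)]
  exact h

theorem norm_lt_two_mul_of_mem_ball (hz : z ∈ Metric.ball (s : ℂ) s) : ‖z‖ < 2 * s := by
  have hs : 0 < s := Metric.pos_of_mem_ball hz
  have h := norm_sub_norm_le z s
  rw [mem_ball_iff_norm] at hz
  rw [Complex.norm_of_nonneg hs.le] at h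
  linarith

end Disc

theorem re_inv_smul_material_law_pos_general
    (H : Type*) [NormedAddCommGroup H] [InnerProductSpace ℂ H] [CompleteSpace H]
    (M₀ : H →L[ℂ] H) (hM₀ : IsSelfAdjoint M₀)
    (r : ℝ) (hr : 0 < r) (M₁ : ℂ → (H →L[ℂ] H))
    (hM₁ : AnalyticOn ℂ M₁ (Metric.ball 0 r))
    (c ρ₁ : ℝ) (hc : 0 < c)
    -- `ρM₀ + Re M₁(0) ≥ c` for all `ρ > ρ₁` :
    (hpos : ∀ ρ > ρ₁, ∀ x : H,
      c * ‖x‖ ^ 2 ≤ (inner ℂ x (((ρ : ℂ) • M₀ +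
        (1 / 2 : ℂ) • (M₁ 0 + adjoint (M₁ 0))) x) : ℂ).re) :
    -- then `Re (z⁻¹ M(z)) ≥ c'` on a disc `B(1/(2ρ₀), 1/(2ρ₀))` :
    ∃ ρ₀ > (0 : ℝ), ∃ c' > (0 : ℝ),
      ∀ z ∈ Metric.ball ((2 * ρ₀ : ℂ))⁻¹ (1 / (2 * ρ₀)), ∀ x : H,
        c' * ‖x‖ ^ 2 ≤ (inner ℂ x ((z⁻¹ • (M₀ + z • M₁ z)) x) : ℂ).re := by
  have hM₁_cont : ContinuousAt M₁ 0 :=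
    hM₁.continuousOn.continuousAt (Metric.isOpen_ball.mem_nhds (Metric.mem_ball_self hr))
  obtain ⟨δ, hδ, hM₁_near⟩ := Metric.continuousAt_iff.mp hM₁_cont (c / 2) (half_pos hc)
  set ρ₀ := max ρ₁ δ⁻¹
  have hρ₀ : 0 < ρ₀ := lt_max_of_lt_right (inv_pos.mpr hδ)
  refine ⟨ρ₀, hρ₀, c / 2, half_pos hc, fun z hz x => ?_⟩
  have hz' : z ∈ Metric.ball (((2 * ρ₀)⁻¹ : ℝ) : ℂ) (2 * ρ₀)⁻¹ := by simpa [one_div] using hz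
  have hρ₀_lt : ρ₀ < z⁻¹.re := by
    simpa only [mul_inv, inv_inv, inv_mul_cancel_left₀ (two_ne_zero (α := ℝ))]
      using lt_re_inv_of_mem_ball hz'
  have hz_small : ‖z‖ < δ :=
    calc ‖z‖ < 2 * (2 * ρ₀)⁻¹ := norm_lt_two_mul_of_mem_ball hz'
      _ = ρ₀⁻¹ := by field_simp
      _ ≤ δ := inv_le_of_inv_le₀ hδ (le_max_right _ _)
  have hz0 : z ≠ 0 := by rintro rfl; simp only [inv_zero, Complex.zero_re] at hρ₀_lt; linarith
  have hM₁z : ‖M₁ 0 - M₁ z‖ < c / 2 := by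
    simpa [dist_eq_norm, norm_sub_rev] using hM₁_near (by simpa using hz_small)
  rw [smul_add, smul_smul, inv_mul_cancel₀ hz0, one_smul]
  have h := sub_mul_le_re_inner_smul_add_apply hM₀ z⁻¹ hM₁z.le x
    (hpos _ ((le_max_left _ _).trans_lt hρ₀_lt) x)
  rwa [sub_half] at h

/-- **If `ρM₀ + Re M₁(0) ≥ c` for all large `ρ`, then `Re z⁻¹M(z) ≥ c'` on a small disc
`B(1/(2ρ₀), 1/(2ρ₀))`, where `M(z) = M₀ + zM₁(z)` with `M₁` analytic and bounded.** -/
theorem re_inv_smul_material_law_pos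
    (H : Type*) [NormedAddCommGroup H] [InnerProductSpace ℂ H] [CompleteSpace H]
    (M₀ : H →L[ℂ] H) (hM₀ : IsSelfAdjoint M₀)
    (r : ℝ) (hr : 0 < r) (M₁ : ℂ → (H →L[ℂ] H))
    (hM₁ : AnalyticOn ℂ M₁ (Metric.ball 0 r))
    (hM₁bdd : ∃ K : ℝ, ∀ z ∈ Metric.ball (0 : ℂ) r, ‖M₁ z‖ ≤ K)
    (c ρ₁ : ℝ) (hc : 0 < c) (hρ₁ : 0 < ρ₁)
    -- `ρM₀ + Re M₁(0) ≥ c` for all `ρ > ρ₁` :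
    (hpos : ∀ ρ > ρ₁, ∀ x : H,
      c * ‖x‖ ^ 2 ≤ (inner ℂ x (((ρ : ℂ) • M₀ +
        (1 / 2 : ℂ) • (M₁ 0 + adjoint (M₁ 0))) x) : ℂ).re) :
    -- then `Re (z⁻¹ M(z)) ≥ c'` on a disc `B(1/(2ρ₀), 1/(2ρ₀))` :
    ∃ ρ₀ > (0 : ℝ), ∃ c' > (0 : ℝ),
      ∀ z ∈ Metric.ball ((2 * ρ₀ : ℂ))⁻¹ (1 / (2 * ρ₀)), ∀ x : H,
        c' * ‖x‖ ^ 2 ≤ (inner ℂ x ((z⁻¹ • (M₀ + z • M₁ z)) x) : ℂ).re :=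
  re_inv_smul_material_law_pos_general H M₀ hM₀ r hr M₁ hM₁ c ρ₁ hc hpos
end
end
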